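/- Let G ≤ GL(V) be a group over an algebraically closed field of characteristic ℓ > 2 that preserves an imprimitivity decomposition V = ⊕_{j=1}^k V_j with dim V_j = 1 for all j. Then G contains no non-identity element τ with (τ − 1)^2 = 0. -/
import Mathlib

/-- Let `G ≤ GL(V)` over an algebraically closed field of characteristic
`ℓ > 2` preserve an imprimitivity decomposition `V = ⊕_{j=1}^k V_j` with `dim V_j = 1` for
all `j`, and suppose `G` contains a non-identity element `τ` with `(τ - 1)^2 = 0`.  Then a
contradiction follows: no such `G` exists when `ℓ > 2`. -/
theorem stmt4 {K V : Type*} [Field K] [IsAlgClosed K] {ℓ : ℕ} [CharP K ℓ] (hℓ : 2 < ℓ)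
    [AddCommGroup V] [Module K V] [FiniteDimensional K V]
    (k : ℕ) (W : Fin k → Submodule K V) (hW : DirectSum.IsInternal W)
    (hdim : ∀ j, Module.finrank K (W j) = 1)
    (G : Subgroup (Module.End K V)ˣ)
    (hG : ∀ g ∈ G, ∀ j : Fin k, ∃ j' : Fin k,
      Submodule.map (g : Module.End K V) (W j) = W j')
    (τ : (Module.End K V)ˣ) (hτG : τ ∈ G) (hτ1 : τ ≠ 1)
    (hτ : ((τ : Module.End K V) - 1) ^ 2 = 0) :
    False := by
  set T : Module.End K V := (τ : Module.End K V) with hT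
  have h2 : (2 : K) ≠ 0 := by
    intro h
    have hdvd : ℓ ∣ 2 := (CharP.cast_eq_zero_iff K ℓ 2).mp h
    exact absurd (Nat.le_of_dvd (by norm_num) hdvd) (by omega)
  have hTinj : Function.Injective T :=
    (Module.End.isUnit_iff T).mp τ.isUnit |>.injective
  have hindep := hW.submodule_iSupIndep
  -- the key pointwise identity
  have key : ∀ v : V, T (T v) - (2 : K) • T v + v = 0 := by
    intro v
    have h := congrArg (fun f : Module.End K V => f v) hτ
    simp only [pow_two, Module.End.mul_apply, LinearMap.sub_apply, Module.End.one_apply,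
      LinearMap.zero_apply, map_sub] at h
    rw [← h]
    module
  -- each W j contains a nonzero vector
  have hnz : ∀ j, ∃ v ∈ W j, v ≠ 0 := by
    intro j
    have : Nontrivial (W j) := Module.nontrivial_of_finrank_pos (R := K)
      (by rw [hdim j]; norm_num)
    obtain ⟨⟨v, hv⟩, hne⟩ := exists_ne (0 : W j)
    exact ⟨v, hv, by simpa [Subtype.ext_iff] using hne⟩
  -- Step 1 : τ maps each W j into itself
  have hfix : ∀ j : Fin k, Submodule.map T (W j) = W j := by
    intro j
    obtain ⟨j', hj'⟩ := hG τ hτG j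
    rcases eq_or_ne j' j with rfl | hne
    · exact hj'
    · exfalso
      obtain ⟨v, hvW, hv0⟩ := hnz j
      have hTv : T v ∈ W j' := hj' ▸ Submodule.mem_map_of_mem hvW
      obtain ⟨j'', hj''⟩ := hG τ hτG j'
      have hTTv : T (T v) ∈ W j'' := hj'' ▸ Submodule.mem_map_of_mem hTv
      rcases eq_or_ne j'' j with rfl | hne'
      · -- 2 • T v ∈ W j ⊓ W j' = ⊥
        have hsum : (2 : K) • T v = T (T v) + v := by
          have h := key v
          symm; apply eq_of_sub_eq_zero
          rw [← h]; abel
        have hmem1 : (2 : K) • T v ∈ W j'' := by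
          rw [hsum]; exact add_mem hTTv hvW
        have hmem2 : (2 : K) • T v ∈ W j' := Submodule.smul_mem _ _ hTv
        have hdisj : Disjoint (W j') (W j'') := hindep.pairwiseDisjoint hne
        have : (2 : K) • T v = 0 :=
          (Submodule.disjoint_def.mp hdisj) _ hmem2 hmem1
        rcases smul_eq_zero.mp this with h | h
        · exact h2 h
        · exact hv0 (hTinj (by simpa using h))
      · -- v ∈ W j ⊓ (⨆ i ≠ j, W i) = ⊥
        have hsum : v = (2 : K) • T v - T (T v) := by
          have h := key v
          apply eq_of_sub_eq_zero
          rw [← h]; abel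
        have hmem : v ∈ ⨆ (i) (_ : i ≠ j), W i := by
          rw [hsum]
          refine sub_mem ?_ ?_
          · exact Submodule.smul_mem _ _ (Submodule.mem_iSup_of_mem j'
              (Submodule.mem_iSup_of_mem hne hTv))
          · exact Submodule.mem_iSup_of_mem j'' (Submodule.mem_iSup_of_mem hne' hTTv)
        have : v = 0 := (Submodule.disjoint_def.mp (hindep j)) v hvW hmem
        exact hv0 this
  -- Step 2 : τ is the identity on each W j
  have hid : ∀ j : Fin k, ∀ v ∈ W j, T v = v := by
    intro j v hv
    by_contra hne
    set w : V := T v - v with hw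
    have hw0 : w ≠ 0 := sub_ne_zero.mpr hne
    have hTvW : T v ∈ W j := (hfix j) ▸ Submodule.mem_map_of_mem hv
    have hwW : w ∈ W j := sub_mem hTvW hv
    have hTw : T w = w := by
      have hk := key v
      have h2' : T (T v) - T v = T v - v := by
        apply eq_of_sub_eq_zero
        rw [← hk]
        rw [two_smul]; abel
      simpa [hw, map_sub] using h2'
    -- W j is one-dimensional spanned by w, so v = c • w
    have hspan : ∀ u : W j, ∃ c : K, c • (⟨w, hwW⟩ : W j) = u :=
      (finrank_eq_one_iff_of_nonzero' (⟨w, hwW⟩ : W j)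
        (by simpa [Subtype.ext_iff] using hw0)).mp (hdim j)
    obtain ⟨c, hc⟩ := hspan ⟨v, hv⟩
    have hvcw : c • w = v := by simpa [Subtype.ext_iff] using hc
    have : T v = v := by
      rw [← hvcw, map_smul, hTw]
    exact hne this
  -- Step 3 : τ = 1
  have hker : ⨆ j, W j ≤ LinearMap.ker (T - 1) := by
    refine iSup_le fun j v hv => ?_
    simp [LinearMap.mem_ker, hid j v hv]
  rw [hW.submodule_iSup_eq_top, top_le_iff] at hker
  have : T - 1 = 0 := LinearMap.ker_eq_top.mp hker
  have hT1 : T = 1 := by rwa [sub_eq_zero] at this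
  exact hτ1 (Units.ext hT1)
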